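/- For every x_j ∈ [0,1], the right-region maximal payoff satisfies U_i((2 + x_j)/3, x_j) = ∫_{(1−x_j)/3}^{1−x_j} c(b) db − 2 ∫₀^{(1−x_j)/3} c(b) db, i.e. U_i((2 + x_j)/3, x_j) = F((1 − x_j)/3). -/

import Mathlib

/-
Since `c` is increasing, a benefactor at `b` pays the cost of the politician farther from `b`,
so politician `i` earns `c |xj - b| - c |xi - b|` from the benefactors on her side of the
midpoint `(xi + xj) / 2` and nothing from the others. Reflecting about `xj` and about `xi`, for
`xj ≤ xi` this is `∫_{d/2}^{1-xj} c - ∫_0^{d/2} c - ∫_0^{1-xi} c` with `d = xi - xj`, and at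
`xi = (2 + xj) / 3` both `d / 2` and `1 - xi` equal `(1 - xj) / 3`.
-/

open MeasureTheory Set

/-- The wage the benefactor at `b` pays: the upper envelope of the two
politicians' policy-production costs. -/
noncomputable def w (c : ℝ → ℝ) (x₁ x₂ b : ℝ) : ℝ :=
  max (c |x₁ - b|) (c |x₂ - b|)

/-- Politician `i`'s expected utility when she locates at `xi` and the
opponent at `xj`, benefactors being uniform on `[0,1]`. -/
noncomputable def U (c : ℝ → ℝ) (xi xj : ℝ) : ℝ :=
  ∫ b in (0:ℝ)..1, (w c xi xj b - c |xi - b|)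


/-- `F t = ∫_t^{3t} c - 2∫_0^t c`, the maximal regional payoff function. -/
noncomputable def F (c : ℝ → ℝ) (t : ℝ) : ℝ :=
  (∫ b in t..(3*t), c b) - 2 * ∫ b in (0:ℝ)..t, c b

section

variable {c : ℝ → ℝ}

theorem integral_comp_abs_sub_of_le {a p q : ℝ} (hap : a ≤ p) (hpq : p ≤ q) :
    ∫ b in p..q, c |a - b| = ∫ s in (p - a)..(q - a), c s := by
  rw [← intervalIntegral.integral_comp_sub_right]
  refine intervalIntegral.integral_congr fun b hb => ?_
  rw [uIcc_of_le hpq] at hb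
  rw [abs_sub_comm, abs_of_nonneg (by linarith [hb.1])]

theorem integral_comp_abs_sub_of_ge {a p q : ℝ} (hpq : p ≤ q) (hqa : q ≤ a) :
    ∫ b in p..q, c |a - b| = ∫ s in (a - q)..(a - p), c s := by
  rw [← intervalIntegral.integral_comp_sub_left]
  refine intervalIntegral.integral_congr fun b hb => ?_
  rw [uIcc_of_le hpq] at hb
  rw [abs_of_nonneg (by linarith [hb.2])]

variable (hc : MonotoneOn c (Icc 0 1))
include hc

theorem w_eq_left {x₁ x₂ b : ℝ} (h : |x₂ - b| ≤ |x₁ - b|) (h₁ : |x₁ - b| ≤ 1) :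
    w c x₁ x₂ b = c |x₁ - b| :=
  max_eq_left (hc ⟨abs_nonneg _, h.trans h₁⟩ ⟨abs_nonneg _, h₁⟩ h)

theorem w_eq_right {x₁ x₂ b : ℝ} (h : |x₁ - b| ≤ |x₂ - b|) (h₂ : |x₂ - b| ≤ 1) :
    w c x₁ x₂ b = c |x₂ - b| :=
  max_eq_right (hc ⟨abs_nonneg _, h.trans h₂⟩ ⟨abs_nonneg _, h₂⟩ h)

theorem intervalIntegrable_comp_abs_sub {x p q : ℝ} (hx : x ∈ Icc (0 : ℝ) 1)
    (hp : p ∈ Icc (0 : ℝ) 1) (hq : q ∈ Icc (0 : ℝ) 1) :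
    IntervalIntegrable (fun b => c |x - b|) volume p q := by
  refine IntervalIntegrable.mono_set ?_ (uIcc_subset_uIcc (a₂ := 0) (b₂ := 1)
    (by rwa [uIcc_of_le zero_le_one]) (by rwa [uIcc_of_le zero_le_one]))
  have mem : ∀ b ∈ Icc (0 : ℝ) 1, |x - b| ∈ Icc (0 : ℝ) 1 := fun b hb =>
    ⟨abs_nonneg _, abs_sub_le_of_nonneg_of_le hx.1 hx.2 hb.1 hb.2⟩
  refine (AntitoneOn.intervalIntegrable ?_).trans (MonotoneOn.intervalIntegrable (a := x) ?_)
  · rw [uIcc_of_le hx.1]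
    intro b hb b' hb' hbb'
    refine hc (mem b' ⟨hb'.1, hb'.2.trans hx.2⟩) (mem b ⟨hb.1, hb.2.trans hx.2⟩) ?_
    rw [abs_of_nonneg (by linarith [hb'.2]), abs_of_nonneg (by linarith [hb.2])]
    linarith
  · rw [uIcc_of_le hx.2]
    intro b hb b' hb' hbb'
    refine hc (mem b ⟨hx.1.trans hb.1, hb.2⟩) (mem b' ⟨hx.1.trans hb'.1, hb'.2⟩) ?_
    rw [abs_sub_comm, abs_of_nonneg (by linarith [hb.1]), abs_sub_comm,
      abs_of_nonneg (by linarith [hb'.1])]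
    linarith

theorem U_eq_integral_of_le {xi xj : ℝ} (hxj : 0 ≤ xj) (hji : xj ≤ xi) (hxi : xi ≤ 1) :
    U c xi xj = ∫ b in ((xi + xj) / 2)..1, (c |xj - b| - c |xi - b|) := by
  have hm0 : 0 ≤ (xi + xj) / 2 := by linarith
  have hm1 : (xi + xj) / 2 ≤ 1 := by linarith
  have h1 : (1 : ℝ) ∈ Icc (0 : ℝ) 1 := ⟨zero_le_one, le_rfl⟩
  have hleft : EqOn (fun b => w c xi xj b - c |xi - b|) (fun _ => 0)
      (uIcc 0 ((xi + xj) / 2)) := by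
    intro b hb
    rw [uIcc_of_le hm0] at hb
    have hxib : |xi - b| = xi - b := abs_of_nonneg (by linarith [hb.2])
    have hcloser : |xj - b| ≤ |xi - b| := by
      rw [hxib, abs_le]; constructor <;> linarith [hb.2]
    simp only [w_eq_left hc hcloser (by rw [hxib]; linarith [hb.1]), sub_self]
  have hright : EqOn (fun b => w c xi xj b - c |xi - b|)
      (fun b => c |xj - b| - c |xi - b|) (uIcc ((xi + xj) / 2) 1) := by
    intro b hb
    rw [uIcc_of_le hm1] at hb
    have hxjb : |xj - b| = b - xj := by rw [abs_sub_comm, abs_of_nonneg (by linarith [hb.1])]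
    have hcloser : |xi - b| ≤ |xj - b| := by
      rw [hxjb, abs_le]; constructor <;> linarith [hb.1]
    simp only [w_eq_right hc hcloser (by rw [hxjb]; linarith [hb.2])]
  have hint : IntervalIntegrable (fun b => c |xj - b| - c |xi - b|) volume ((xi + xj) / 2) 1 :=
    (intervalIntegrable_comp_abs_sub hc ⟨hxj, hji.trans hxi⟩ ⟨hm0, hm1⟩ h1).sub
      (intervalIntegrable_comp_abs_sub hc ⟨hxj.trans hji, hxi⟩ ⟨hm0, hm1⟩ h1)
  rw [U, ← intervalIntegral.integral_add_adjacent_intervals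
      (intervalIntegrable_const.congr (hleft.symm.mono uIoc_subset_uIcc))
      (hint.congr (hright.symm.mono uIoc_subset_uIcc)),
    intervalIntegral.integral_congr hleft, intervalIntegral.integral_congr hright,
    intervalIntegral.integral_zero, zero_add]

theorem U_eq_of_le {xi xj : ℝ} (hxj : 0 ≤ xj) (hji : xj ≤ xi) (hxi : xi ≤ 1) :
    U c xi xj = (∫ s in ((xi - xj) / 2)..(1 - xj), c s)
      - (∫ s in 0..((xi - xj) / 2), c s) - ∫ s in 0..(1 - xi), c s := by
  have hm0 : 0 ≤ (xi + xj) / 2 := by linarith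
  have hm1 : (xi + xj) / 2 ≤ 1 := by linarith
  have hxj' : xj ∈ Icc (0 : ℝ) 1 := ⟨hxj, hji.trans hxi⟩
  have hxi' : xi ∈ Icc (0 : ℝ) 1 := ⟨hxj.trans hji, hxi⟩
  have h1 : (1 : ℝ) ∈ Icc (0 : ℝ) 1 := ⟨zero_le_one, le_rfl⟩
  rw [U_eq_integral_of_le hc hxj hji hxi, intervalIntegral.integral_sub
      (intervalIntegrable_comp_abs_sub hc hxj' ⟨hm0, hm1⟩ h1)
      (intervalIntegrable_comp_abs_sub hc hxi' ⟨hm0, hm1⟩ h1),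
    ← intervalIntegral.integral_add_adjacent_intervals
      (intervalIntegrable_comp_abs_sub hc hxi' ⟨hm0, hm1⟩ hxi')
      (intervalIntegrable_comp_abs_sub hc hxi' hxi' h1),
    integral_comp_abs_sub_of_le (by linarith) hm1,
    integral_comp_abs_sub_of_ge (by linarith) le_rfl, integral_comp_abs_sub_of_le le_rfl hxi,
    sub_self, show (xi + xj) / 2 - xj = (xi - xj) / 2 by ring,
    show xi - (xi + xj) / 2 = (xi - xj) / 2 by ring]
  ring

end

theorem right_region_max_payoff_general (c : ℝ → ℝ)
    (hmono : StrictMonoOn c (Icc 0 1))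
    (xj : ℝ) (hxj : xj ∈ Icc (0:ℝ) 1) :
    U c ((2 + xj) / 3) xj
      = (∫ b in ((1 - xj) / 3)..(1 - xj), c b)
        - 2 * ∫ b in (0:ℝ)..((1 - xj) / 3), c b ∧
    U c ((2 + xj) / 3) xj = F c ((1 - xj) / 3) := by
  have hU : U c ((2 + xj) / 3) xj
      = (∫ b in ((1 - xj) / 3)..(1 - xj), c b) - 2 * ∫ b in (0:ℝ)..((1 - xj) / 3), c b := by
    rw [U_eq_of_le hmono.monotoneOn hxj.1 (by linarith [hxj.2]) (by linarith [hxj.2]),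
      show ((2 + xj) / 3 - xj) / 2 = (1 - xj) / 3 by ring,
      show 1 - (2 + xj) / 3 = (1 - xj) / 3 by ring]
    ring
  refine ⟨hU, ?_⟩
  rw [hU, F, show 3 * ((1 - xj) / 3) = 1 - xj by ring]

theorem right_region_max_payoff (c : ℝ → ℝ)
    (hc : ContinuousOn c (Icc 0 1)) (hmono : StrictMonoOn c (Icc 0 1))
    (xj : ℝ) (hxj : xj ∈ Icc (0:ℝ) 1) :
    U c ((2 + xj) / 3) xj
      = (∫ b in ((1 - xj) / 3)..(1 - xj), c b)
        - 2 * ∫ b in (0:ℝ)..((1 - xj) / 3), c b ∧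
    U c ((2 + xj) / 3) xj = F c ((1 - xj) / 3) :=
  right_region_max_payoff_general c hmono xj hxj
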